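/- (Uniform bias bound for the kernel-weighted mean.) Let μ : [0,1]² → ℝ be continuously differentiable with both partial derivatives bounded in absolute value by a constant C on [0,1]², and let G : [−1,1] → [0,∞) be a function that is not identically zero, continuous, symmetric and non-increasing on [0,1] with G(0) = 1. Let n, m, 𝒦 ≥ 1 be integers and (x_v, y_v) ∈ [0,1]² with p_v = ⌊n x_v⌋, q_v = ⌊m y_v⌋ satisfying 2𝒦+1 ≤ p_v ≤ n−2𝒦 and 2𝒦+1 ≤ q_v ≤ m−2𝒦 for v = 1,…,V, and set T_{n,m} = Σ_{i=−𝒦}^{𝒦} Σ_{j=−𝒦}^{𝒦} G(i/𝒦) G(j/𝒦). Then for every v, (1/T_{n,m}) | Σ_{i=−𝒦}^{𝒦} Σ_{j=−𝒦}^{𝒦} ( μ((i+p_v)/n, (j+q_v)/m) − μ(x_v, y_v) ) G(i/𝒦) G(j/𝒦) | ≤ C (𝒦+1)/n + C (𝒦+1)/m. -/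

import Mathlib

open MeasureTheory ProbabilityTheory Filter

noncomputable section

variable {Ω : Type} [MeasurableSpace Ω]

/-- The `L^M` norm `‖Z‖_M = (E|Z|^M)^{1/M}`. -/
def rnorm (P : Measure Ω) (M : ℝ) (f : Ω → ℝ) : ℝ :=
  (∫ ω, |f ω| ^ M ∂P) ^ (1 / M)

/-- σ-field generated by a sub-family `{e_i^{(j)} : (i,j) ∈ C}` of a doubly indexed field. -/
def sigGen (e : ℤ → ℤ → Ω → ℝ) (C : Set (ℤ × ℤ)) : MeasurableSpace Ω :=
  ⨆ p ∈ C, MeasurableSpace.comap (e p.1 p.2) inferInstance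

/-- Window σ-field `H_{i,(a,b)}^{(j),(c,d)} = σ(e_x^{(y)} : i-a ≤ x ≤ i+b, j-c ≤ y ≤ j+d)`. -/
def Hwin (e : ℤ → ℤ → Ω → ℝ) (i j a b c d : ℤ) : MeasurableSpace Ω :=
  sigGen e {p : ℤ × ℤ | i - a ≤ p.1 ∧ p.1 ≤ i + b ∧ j - c ≤ p.2 ∧ p.2 ≤ j + d}

/-- Underlying data for a non-stationary random field `ε_i^{(j)} = G_{i,n}^{(j),m}(e_{i-u}^{(j-v)})`:
a doubly-indexed shift field `e`, an auxiliary independent copy field `edag` (all variables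
mutually independent, `edag i j` distributed as `e i j`), and location-dependent measurable
transformations `F i j`. -/
structure FieldSetup (Ω : Type) [MeasurableSpace Ω] (P : Measure Ω) where
  e : ℤ → ℤ → Ω → ℝ
  edag : ℤ → ℤ → Ω → ℝ
  F : ℤ → ℤ → ((ℤ × ℤ) → ℝ) → ℝ
  meas_e : ∀ i j, Measurable (e i j)
  meas_edag : ∀ i j, Measurable (edag i j)
  meas_F : ∀ i j, Measurable (F i j)
  indep : iIndepFun
    (Sum.elim (fun p : ℤ × ℤ => e p.1 p.2) (fun p : ℤ × ℤ => edag p.1 p.2)) P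
  ident : ∀ i j, IdentDistrib (edag i j) (e i j) P P

variable {P : Measure Ω}

/-- The random field `ε_i^{(j)} = G_{i,n}^{(j),m}(e_{i-u}^{(j-v)}; u,v ∈ ℤ)`. -/
def FieldSetup.eps (S : FieldSetup Ω P) (i j : ℤ) (ω : Ω) : ℝ :=
  S.F i j fun uv => S.e (i - uv.1) (j - uv.2) ω

/-- The coupled field `ε_{i,p}^{(j),(q)}`, obtained from `ε_i^{(j)}` by replacing the single
coordinate `e_{i+p}^{(j+q)}` with its independent copy `e_{i+p}^{(j+q)†}`. -/
def FieldSetup.epsC (S : FieldSetup Ω P) (i j p q : ℤ) (ω : Ω) : ℝ :=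
  S.F i j fun uv =>
    if i - uv.1 = i + p ∧ j - uv.2 = j + q then S.edag (i + p) (j + q) ω
    else S.e (i - uv.1) (j - uv.2) ω

/-- The dependence measure `δ_p^{(q)} = max_{1≤i≤n, 1≤j≤m} ‖ε_i^{(j)} - ε_{i,p}^{(j),(q)}‖_M`. -/
def FieldSetup.delta (S : FieldSetup Ω P) (M : ℝ) (n m : ℕ) (p q : ℤ) : ℝ :=
  sSup ((fun ij : ℤ × ℤ =>
      rnorm P M fun ω => S.eps ij.1 ij.2 ω - S.epsC ij.1 ij.2 p q ω) ''
    (Set.Icc 1 (n : ℤ) ×ˢ Set.Icc 1 (m : ℤ)))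

/-- `(M,α)`-short range dependence with constant `C₀`. -/
def FieldSetup.SRD (S : FieldSetup Ω P) (n m : ℕ) (M α C₀ : ℝ) : Prop :=
  (∀ i j : ℤ, 1 ≤ i → i ≤ n → 1 ≤ j → j ≤ m → ∫ ω, S.eps i j ω ∂P = 0) ∧
  (∀ i j : ℤ, 1 ≤ i → i ≤ n → 1 ≤ j → j ≤ m → rnorm P M (S.eps i j) ≤ C₀) ∧
  (∀ p q : ℤ, (1 + |(p : ℝ)| + |(q : ℝ)|) ^ α * S.delta M n m p q ≤ C₀)

/-- Conditional expectation `E[ε_i^{(j)} | H_{i,(a,b)}^{(j),(c,d)}]`. -/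
def FieldSetup.cexp (S : FieldSetup Ω P) (i j a b c d : ℤ) : Ω → ℝ :=
  P[S.eps i j | Hwin S.e i j a b c d]

/-- `Σ_{i=1}^n Σ_{j=1}^m a_i^{(j)2}`. -/
def sqSum (n m : ℕ) (a : ℤ → ℤ → ℝ) : ℝ :=
  ∑ i ∈ Finset.Icc (1 : ℤ) (n : ℤ), ∑ j ∈ Finset.Icc (1 : ℤ) (m : ℤ), (a i j) ^ 2

/-- The linear form `Σ_{i=1}^n Σ_{j=1}^m a_i^{(j)} ε_i^{(j)}`. -/
def linForm (S : FieldSetup Ω P) (n m : ℕ) (a : ℤ → ℤ → ℝ) (ω : Ω) : ℝ :=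
  ∑ i ∈ Finset.Icc (1 : ℤ) (n : ℤ), ∑ j ∈ Finset.Icc (1 : ℤ) (m : ℤ), a i j * S.eps i j ω

/-- Coefficient conditions (eq. (10) of the paper) with constant `C`, for bandwidth `K`,
number of positions `V` and positions `x v`, `y v`. -/
def CoeffCond (n m K V : ℕ) (x y : ℕ → ℤ) (a : ℕ → ℤ → ℤ → ℝ) (C : ℝ) : Prop :=
  (∀ v ∈ Finset.Icc 1 V, 0 < sqSum n m (a v)) ∧
  (∃ lam tau : ℕ → ℤ → ℝ,
    (∀ v i, 0 ≤ lam v i) ∧ (∀ v j, 0 ≤ tau v j) ∧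
    (∀ v ∈ Finset.Icc 1 V, ∀ i ∈ Finset.Icc (1 : ℤ) (n : ℤ), ∀ j ∈ Finset.Icc (1 : ℤ) (m : ℤ),
      |a v i j| / Real.sqrt (sqSum n m (a v)) ≤ lam v i * tau v j) ∧
    (∀ v ∈ Finset.Icc 1 V, ∑ i ∈ Finset.Icc (1 : ℤ) (n : ℤ), (lam v i) ^ 2 ≤ C) ∧
    (∀ v ∈ Finset.Icc 1 V, ∑ j ∈ Finset.Icc (1 : ℤ) (m : ℤ), (tau v j) ^ 2 ≤ C) ∧
    (∀ v i, lam v i ≤ C / Real.sqrt K) ∧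
    (∀ v j, tau v j ≤ C / Real.sqrt K)) ∧
  (∀ v ∈ Finset.Icc 1 V, ∀ i j : ℤ, ((K : ℤ) < |i - x v| ∨ (K : ℤ) < |j - y v|) → a v i j = 0)

/-- Lower bound `c₀` on the covariance quadratic form (eq. (11) of the paper). -/
def CovLB (S : FieldSetup Ω P) (n m : ℕ) (c₀ : ℝ) : Prop :=
  ∀ b : ℤ → ℤ → ℝ,
    c₀ * sqSum n m b ≤
      ∑ i₁ ∈ Finset.Icc (1 : ℤ) (n : ℤ), ∑ j₁ ∈ Finset.Icc (1 : ℤ) (m : ℤ),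
        ∑ i₂ ∈ Finset.Icc (1 : ℤ) (n : ℤ), ∑ j₂ ∈ Finset.Icc (1 : ℤ) (m : ℤ),
          b i₁ j₁ * b i₂ j₂ * ∫ ω, S.eps i₁ j₁ ω * S.eps i₂ j₂ ω ∂P

/-- `(ξ_1,…,ξ_V)` is a centered jointly Gaussian vector with covariance matrix `σ`:
every linear combination is Gaussian with mean `0` and the induced variance. -/
def IsGaussianVector {Ω' : Type} [MeasurableSpace Ω'] (P' : Measure Ω') (V : ℕ)
    (ξ : ℕ → Ω' → ℝ) (σ : ℕ → ℕ → ℝ) : Prop :=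
  (∀ v, Measurable (ξ v)) ∧
  ∀ c : ℕ → ℝ,
    Measure.map (fun ω => ∑ v ∈ Finset.Icc 1 V, c v * ξ v ω) P' =
      gaussianReal 0 (Real.toNNReal
        (∑ v₁ ∈ Finset.Icc 1 V, ∑ v₂ ∈ Finset.Icc 1 V, c v₁ * c v₂ * σ v₁ v₂))

/-- A variance kernel function (Definition 3 of the paper). -/
def IsVarKernel (K : ℝ → ℝ) : Prop :=
  (∀ x, K x ∈ Set.Icc (0 : ℝ) 1) ∧ (∀ x, K (-x) = K x) ∧ ContDiff ℝ 1 K ∧ K 0 = 1 ∧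
  AntitoneOn K (Set.Ici 0) ∧
  (∀ x : ℝ, (FourierTransform.fourier (fun t : ℝ => (K t : ℂ)) x).im = 0 ∧
    0 ≤ (FourierTransform.fourier (fun t : ℝ => (K t : ℂ)) x).re) ∧
  IntegrableOn (fun x => (K x) ^ 2) (Set.Ici 0) ∧
  IntegrableOn (fun x => x * K x) (Set.Ici 0)

/-- The rate `S(ℬ)` of Theorem 3: `ℬ^{5-α}` for `5 < α < 6`, `log ℬ / ℬ` for `α = 6`,
`1/ℬ` for `α > 6`. -/
def Sfun (α B : ℝ) : ℝ :=
  if α < 6 then B ^ (5 - α) else if α = 6 then Real.log B / B else 1 / B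

/-- `T_{n,m} = Σ_{i=-K}^{K} Σ_{j=-K}^{K} G(i/K) G(j/K)`. -/
def Tnm (G : ℝ → ℝ) (K : ℕ) : ℝ :=
  ∑ i ∈ Finset.Icc (-(K : ℤ)) (K : ℤ), ∑ j ∈ Finset.Icc (-(K : ℤ)) (K : ℤ),
    G ((i : ℝ) / (K : ℝ)) * G ((j : ℝ) / (K : ℝ))

/-- `B_{n,m} = √(Σ_{i=-K}^{K} Σ_{j=-K}^{K} G²(i/K) G²(j/K))`. -/
def Bnm (G : ℝ → ℝ) (K : ℕ) : ℝ :=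
  Real.sqrt (∑ i ∈ Finset.Icc (-(K : ℤ)) (K : ℤ), ∑ j ∈ Finset.Icc (-(K : ℤ)) (K : ℤ),
    G ((i : ℝ) / (K : ℝ)) ^ 2 * G ((j : ℝ) / (K : ℝ)) ^ 2)

/-- The observations `X_i^{(j)} = μ(i/n, j/m) + ε_i^{(j)}`. -/
def Xobs (S : FieldSetup Ω P) (μ : ℝ → ℝ → ℝ) (n m : ℕ) (i j : ℤ) (ω : Ω) : ℝ :=
  μ ((i : ℝ) / (n : ℝ)) ((j : ℝ) / (m : ℝ)) + S.eps i j ω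

/-- The Nadaraya–Watson estimator centred at the grid point `(p, q)`. -/
def muhatAt (S : FieldSetup Ω P) (μ : ℝ → ℝ → ℝ) (n m K : ℕ) (G : ℝ → ℝ)
    (p q : ℤ) (ω : Ω) : ℝ :=
  (∑ i ∈ Finset.Icc (p - (K : ℤ)) (p + (K : ℤ)), ∑ j ∈ Finset.Icc (q - (K : ℤ)) (q + (K : ℤ)),
      Xobs S μ n m i j ω * G (((i - p : ℤ) : ℝ) / (K : ℝ)) * G (((j - q : ℤ) : ℝ) / (K : ℝ))) /
  (∑ i ∈ Finset.Icc (p - (K : ℤ)) (p + (K : ℤ)), ∑ j ∈ Finset.Icc (q - (K : ℤ)) (q + (K : ℤ)),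
      G (((i - p : ℤ) : ℝ) / (K : ℝ)) * G (((j - q : ℤ) : ℝ) / (K : ℝ)))

/-- The normalized weights `c_{i,v}^{(j)}` for the position `(p,q) = (p_v, q_v)`. -/
def nwC (G : ℝ → ℝ) (K : ℕ) (p q : ℤ) (i j : ℤ) : ℝ :=
  if |i - p| ≤ (K : ℤ) ∧ |j - q| ≤ (K : ℤ) then
    G (((i - p : ℤ) : ℝ) / (K : ℝ)) * G (((j - q : ℤ) : ℝ) / (K : ℝ)) / Bnm G K
  else 0

/-- `σ_v = √(Var(Σ_{i,j} c_{i,v}^{(j)} ε_i^{(j)}))`. -/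
def sigmaV (S : FieldSetup Ω P) (n m K : ℕ) (G : ℝ → ℝ) (p q : ℤ) : ℝ :=
  Real.sqrt ((∫ ω, (linForm S n m (nwC G K p q) ω) ^ 2 ∂P) -
    (∫ ω, linForm S n m (nwC G K p q) ω ∂P) ^ 2)

/-- The HAC estimator `σ̂_v` of the standard deviation, built from the residuals
`ε̂_i^{(j)} = X_i^{(j)} - μ̂(i/n, j/m)`. -/
def sigmaHat (S : FieldSetup Ω P) (μ : ℝ → ℝ → ℝ) (n m K : ℕ) (G Kk : ℝ → ℝ) (B : ℝ)
    (p q : ℤ) (ω : Ω) : ℝ :=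
  Real.sqrt (∑ i₁ ∈ Finset.Icc (p - (K : ℤ)) (p + (K : ℤ)),
    ∑ j₁ ∈ Finset.Icc (q - (K : ℤ)) (q + (K : ℤ)),
      ∑ i₂ ∈ Finset.Icc (p - (K : ℤ)) (p + (K : ℤ)),
        ∑ j₂ ∈ Finset.Icc (q - (K : ℤ)) (q + (K : ℤ)),
          nwC G K p q i₁ j₁ * nwC G K p q i₂ j₂ *
            (Xobs S μ n m i₁ j₁ ω - muhatAt S μ n m K G i₁ j₁ ω) *
            (Xobs S μ n m i₂ j₂ ω - muhatAt S μ n m K G i₂ j₂ ω) *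
            Kk (((i₁ - i₂ : ℤ) : ℝ) / B) * Kk (((j₁ - j₂ : ℤ) : ℝ) / B))

/-- The bootstrap statistic `μ̂*(x_v, y_v)` (for the position with `p_v = p`, `q_v = q`),
built from square-root weights `qn`, `qm` and i.i.d. standard normal multipliers `estar`. -/
def muhatStar (S : FieldSetup Ω P) (μ : ℝ → ℝ → ℝ) (n m K : ℕ) (G : ℝ → ℝ)
    (qn qm : ℤ → ℤ → ℝ) (estar : ℤ → ℤ → Ω → ℝ) (p q : ℤ) (ω : Ω) : ℝ :=
  muhatAt S μ n m K G p q ω + (1 / Tnm G K) *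
    ∑ pp ∈ Finset.Icc (1 : ℤ) (n : ℤ), ∑ qq ∈ Finset.Icc (1 : ℤ) (m : ℤ),
      (∑ i ∈ Finset.Icc (-(K : ℤ)) (K : ℤ), ∑ j ∈ Finset.Icc (-(K : ℤ)) (K : ℤ),
        G ((i : ℝ) / (K : ℝ)) * G ((j : ℝ) / (K : ℝ)) *
          (Xobs S μ n m (i + p) (j + q) ω - muhatAt S μ n m K G (i + p) (j + q) ω) *
          qn (i + p) pp * qm (j + q) qq) * estar pp qq ω

/-- The σ-field generated by the data `{X_i^{(j)} : 1 ≤ i ≤ n, 1 ≤ j ≤ m}`. -/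
def dataSigma (S : FieldSetup Ω P) (μ : ℝ → ℝ → ℝ) (n m : ℕ) : MeasurableSpace Ω :=
  ⨆ ij ∈ (Set.Icc 1 (n : ℤ) ×ˢ Set.Icc 1 (m : ℤ)),
    MeasurableSpace.comap (fun ω => Xobs S μ n m ij.1 ij.2 ω) inferInstance

/-- Conditional probability of the event `A` given the σ-field `m` (as a random variable). -/
def condProb (P : Measure Ω) (m : MeasurableSpace Ω) (A : Set Ω) : Ω → ℝ :=
  P[A.indicator (fun _ => (1 : ℝ)) | m]

/-- Covariance `E[ξ_{v₁} ξ_{v₂}]` of the limiting Gaussian vector in Theorems 4–5. -/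
def xiCov (S : FieldSetup Ω P) (K : ℕ) (G : ℝ → ℝ) (p q : ℕ → ℤ) (v₁ v₂ : ℕ) : ℝ :=
  (Bnm G K) ⁻¹ ^ 2 *
    ∑ i₁ ∈ Finset.Icc (-(K : ℤ)) (K : ℤ), ∑ j₁ ∈ Finset.Icc (-(K : ℤ)) (K : ℤ),
      ∑ i₂ ∈ Finset.Icc (-(K : ℤ)) (K : ℤ), ∑ j₂ ∈ Finset.Icc (-(K : ℤ)) (K : ℤ),
        (∫ ω, S.eps (i₁ + p v₁) (j₁ + q v₁) ω * S.eps (i₂ + p v₂) (j₂ + q v₂) ω ∂P) *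
          G ((i₁ : ℝ) / (K : ℝ)) * G ((j₁ : ℝ) / (K : ℝ)) *
          G ((i₂ : ℝ) / (K : ℝ)) * G ((j₂ : ℝ) / (K : ℝ))

/-- The data of the Nadaraya–Watson estimation problem, as a family indexed by the
grid dimensions `(n, m) ∈ ℕ × ℕ`. -/
structure NWSetup (Ω : Type) [MeasurableSpace Ω] (P : Measure Ω) where
  S : ℕ × ℕ → FieldSetup Ω P
  μ : ℝ → ℝ → ℝ
  G : ℝ → ℝ
  K : ℕ × ℕ → ℕ
  V : ℕ × ℕ → ℕ
  xs : ℕ × ℕ → ℕ → ℝ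
  ys : ℕ × ℕ → ℕ → ℝ
  M : ℝ
  α : ℝ
  αV : ℝ
  C₀ : ℝ
  CV : ℝ
  c₀ : ℝ

/-- `p_v = ⌊n x_v⌋`. -/
def NWSetup.pv (W : NWSetup Ω P) (nm : ℕ × ℕ) (v : ℕ) : ℤ := ⌊(nm.1 : ℝ) * W.xs nm v⌋

/-- `q_v = ⌊m y_v⌋`. -/
def NWSetup.qv (W : NWSetup Ω P) (nm : ℕ × ℕ) (v : ℕ) : ℤ := ⌊(nm.2 : ℝ) * W.ys nm v⌋

/-- `μ̂(x_v, y_v)`. -/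
def NWSetup.muhat (W : NWSetup Ω P) (nm : ℕ × ℕ) (v : ℕ) (ω : Ω) : ℝ :=
  muhatAt (W.S nm) W.μ nm.1 nm.2 (W.K nm) W.G (W.pv nm v) (W.qv nm v) ω

/-- Assumptions (A1)–(A4) of Section 4 of the paper. -/
def NWSetup.Assumptions (W : NWSetup Ω P) : Prop :=
  -- (A1)
  ContDiffOn ℝ 1 (fun p : ℝ × ℝ => W.μ p.1 p.2) (Set.Icc 0 1 ×ˢ Set.Icc 0 1) ∧
  ContinuousOn W.G (Set.Icc (-1) 1) ∧ (∀ x, 0 ≤ W.G x) ∧ (∀ x, W.G (-x) = W.G x) ∧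
  AntitoneOn W.G (Set.Icc 0 1) ∧ W.G 0 = 1 ∧
  Tendsto (fun nm => ((W.K nm : ℝ))) atTop atTop ∧
  Tendsto (fun nm => (W.K nm : ℝ) ^ 2 * Real.sqrt (Real.log (W.K nm)) / (nm.1 : ℝ))
    atTop (nhds 0) ∧
  Tendsto (fun nm => (W.K nm : ℝ) ^ 2 * Real.sqrt (Real.log (W.K nm)) / (nm.2 : ℝ))
    atTop (nhds 0) ∧
  -- (A2)
  (0 ≤ W.αV) ∧ (W.αV < (W.α - 3) * W.M / (1 + 5 * (W.α - 3))) ∧ (0 < W.CV) ∧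
  (∀ nm, (W.V nm : ℝ) ≤ W.CV * (W.K nm : ℝ) ^ W.αV) ∧
  (∀ nm, ∀ v ∈ Finset.Icc 1 (W.V nm),
    W.xs nm v ∈ Set.Icc (0 : ℝ) 1 ∧ W.ys nm v ∈ Set.Icc (0 : ℝ) 1 ∧
    2 * (W.K nm : ℤ) + 1 ≤ W.pv nm v ∧ W.pv nm v ≤ (nm.1 : ℤ) - 2 * (W.K nm : ℤ) ∧
    2 * (W.K nm : ℤ) + 1 ≤ W.qv nm v ∧ W.qv nm v ≤ (nm.2 : ℤ) - 2 * (W.K nm : ℤ)) ∧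
  -- (A3)
  (4 < W.M) ∧ (5 < W.α) ∧ (0 < W.C₀) ∧ (∀ nm, (W.S nm).SRD nm.1 nm.2 W.M W.α W.C₀) ∧
  -- (A4)
  (0 < W.c₀) ∧ (∀ nm, CovLB (W.S nm) nm.1 nm.2 W.c₀)

lemma lip_fst (μ : ℝ → ℝ → ℝ) (C : ℝ)
    (hμ : ContDiffOn ℝ 1 (fun p : ℝ × ℝ => μ p.1 p.2) (Set.Icc 0 1 ×ˢ Set.Icc 0 1))
    (hD1 : ∀ x ∈ Set.Icc (0 : ℝ) 1, ∀ y ∈ Set.Icc (0 : ℝ) 1,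
      |derivWithin (fun s => μ s y) (Set.Icc 0 1) x| ≤ C)
    {y : ℝ} (hy : y ∈ Set.Icc (0 : ℝ) 1) {a b : ℝ}
    (ha : a ∈ Set.Icc (0 : ℝ) 1) (hb : b ∈ Set.Icc (0 : ℝ) 1) :
    |μ b y - μ a y| ≤ C * |b - a| := by
  have hdiff : DifferentiableOn ℝ (fun s => μ s y) (Set.Icc 0 1) := by
    have hcomp : ContDiffOn ℝ 1 ((fun p : ℝ × ℝ => μ p.1 p.2) ∘ (fun s => (s, y)))
        (Set.Icc 0 1) :=
      hμ.comp ((contDiff_id.prodMk contDiff_const).contDiffOn) (fun s hs => ⟨hs, hy⟩)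
    exact hcomp.differentiableOn one_ne_zero
  have := Convex.norm_image_sub_le_of_norm_derivWithin_le hdiff
    (fun x hx => by simpa using hD1 x hx y hy) (convex_Icc (0:ℝ) 1) ha hb
  simpa [Real.norm_eq_abs] using this

lemma lip_snd (μ : ℝ → ℝ → ℝ) (C : ℝ)
    (hμ : ContDiffOn ℝ 1 (fun p : ℝ × ℝ => μ p.1 p.2) (Set.Icc 0 1 ×ˢ Set.Icc 0 1))
    (hD2 : ∀ x ∈ Set.Icc (0 : ℝ) 1, ∀ y ∈ Set.Icc (0 : ℝ) 1,
      |derivWithin (fun t => μ x t) (Set.Icc 0 1) y| ≤ C)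
    {x : ℝ} (hx : x ∈ Set.Icc (0 : ℝ) 1) {a b : ℝ}
    (ha : a ∈ Set.Icc (0 : ℝ) 1) (hb : b ∈ Set.Icc (0 : ℝ) 1) :
    |μ x b - μ x a| ≤ C * |b - a| := by
  have hdiff : DifferentiableOn ℝ (fun t => μ x t) (Set.Icc 0 1) := by
    have hcomp : ContDiffOn ℝ 1 ((fun p : ℝ × ℝ => μ p.1 p.2) ∘ (fun t => (x, t)))
        (Set.Icc 0 1) :=
      hμ.comp ((contDiff_const.prodMk contDiff_id).contDiffOn) (fun t ht => ⟨hx, ht⟩)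
    exact hcomp.differentiableOn one_ne_zero
  have := Convex.norm_image_sub_le_of_norm_derivWithin_le hdiff
    (fun y hy => by simpa using hD2 x hx y hy) (convex_Icc (0:ℝ) 1) ha hb
  simpa [Real.norm_eq_abs] using this

/-- Grid point membership and distance bound. -/
lemma grid_bound (n 𝒦 : ℕ) (hn : 1 ≤ n) (x : ℝ) (hx : x ∈ Set.Icc (0 : ℝ) 1)
    (hlo : 2 * (𝒦 : ℤ) + 1 ≤ ⌊(n : ℝ) * x⌋) (hhi : ⌊(n : ℝ) * x⌋ ≤ (n : ℤ) - 2 * (𝒦 : ℤ))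
    (i : ℤ) (hi : i ∈ Finset.Icc (-(𝒦 : ℤ)) (𝒦 : ℤ)) :
    ((i + ⌊(n : ℝ) * x⌋ : ℤ) : ℝ) / (n : ℝ) ∈ Set.Icc (0 : ℝ) 1 ∧
      |((i + ⌊(n : ℝ) * x⌋ : ℤ) : ℝ) / (n : ℝ) - x| ≤ ((𝒦 : ℝ) + 1) / (n : ℝ) := by
  simp only [Finset.mem_Icc] at hi
  have hnpos : (0 : ℝ) < n := by exact_mod_cast hn
  set p : ℤ := ⌊(n : ℝ) * x⌋ with hp
  have h1 : (1 : ℤ) ≤ i + p := by omega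
  have h2 : i + p ≤ (n : ℤ) := by omega
  have h1R : (1 : ℝ) ≤ ((i + p : ℤ) : ℝ) := by exact_mod_cast h1
  have h2R : ((i + p : ℤ) : ℝ) ≤ (n : ℝ) := by exact_mod_cast h2
  have hpfl : (p : ℝ) ≤ (n : ℝ) * x := Int.floor_le _
  have hpfl' : (n : ℝ) * x < (p : ℝ) + 1 := Int.lt_floor_add_one _
  have hiK : |(i : ℝ)| ≤ (𝒦 : ℝ) := by
    rw [abs_le]; constructor <;> [exact_mod_cast hi.1; exact_mod_cast hi.2]
  refine ⟨⟨by positivity, by rw [div_le_one hnpos]; exact h2R⟩, ?_⟩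
  have key : |((i + p : ℤ) : ℝ) - (n : ℝ) * x| ≤ (𝒦 : ℝ) + 1 := by
    have : ((i + p : ℤ) : ℝ) - (n : ℝ) * x = (i : ℝ) + ((p : ℝ) - (n : ℝ) * x) := by
      push_cast; ring
    rw [this]
    calc |(i : ℝ) + ((p : ℝ) - (n : ℝ) * x)| ≤ |(i : ℝ)| + |(p : ℝ) - (n : ℝ) * x| :=
          abs_add_le _ _
      _ ≤ (𝒦 : ℝ) + 1 := by
          have : |(p : ℝ) - (n : ℝ) * x| ≤ 1 := by rw [abs_le]; constructor <;> linarith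
          linarith
  have : ((i + p : ℤ) : ℝ) / (n : ℝ) - x = (((i + p : ℤ) : ℝ) - (n : ℝ) * x) / (n : ℝ) := by
    field_simp
  rw [this, abs_div, abs_of_pos hnpos]
  exact (div_le_div_iff_of_pos_right hnpos).mpr key

/-- uniform bias bound for the kernel-weighted mean. -/
theorem stmt17 (μ : ℝ → ℝ → ℝ) (G : ℝ → ℝ) (C : ℝ)
    (hμ : ContDiffOn ℝ 1 (fun p : ℝ × ℝ => μ p.1 p.2) (Set.Icc 0 1 ×ˢ Set.Icc 0 1))
    (hD1 : ∀ x ∈ Set.Icc (0 : ℝ) 1, ∀ y ∈ Set.Icc (0 : ℝ) 1,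
      |derivWithin (fun s => μ s y) (Set.Icc 0 1) x| ≤ C)
    (hD2 : ∀ x ∈ Set.Icc (0 : ℝ) 1, ∀ y ∈ Set.Icc (0 : ℝ) 1,
      |derivWithin (fun t => μ x t) (Set.Icc 0 1) y| ≤ C)
    (hGne : ∃ x, G x ≠ 0) (hGcont : ContinuousOn G (Set.Icc (-1) 1))
    (hGpos : ∀ x, 0 ≤ G x) (hGsym : ∀ x, G (-x) = G x)
    (hGanti : AntitoneOn G (Set.Icc 0 1)) (hG0 : G 0 = 1)
    (n m 𝒦 V : ℕ) (hn : 1 ≤ n) (hm : 1 ≤ m) (h𝒦 : 1 ≤ 𝒦)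
    (xs ys : ℕ → ℝ)
    (hxy : ∀ v ∈ Finset.Icc 1 V, xs v ∈ Set.Icc (0 : ℝ) 1 ∧ ys v ∈ Set.Icc (0 : ℝ) 1)
    (hpq : ∀ v ∈ Finset.Icc 1 V,
      2 * (𝒦 : ℤ) + 1 ≤ ⌊(n : ℝ) * xs v⌋ ∧ ⌊(n : ℝ) * xs v⌋ ≤ (n : ℤ) - 2 * (𝒦 : ℤ) ∧
      2 * (𝒦 : ℤ) + 1 ≤ ⌊(m : ℝ) * ys v⌋ ∧ ⌊(m : ℝ) * ys v⌋ ≤ (m : ℤ) - 2 * (𝒦 : ℤ)) :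
    ∀ v ∈ Finset.Icc 1 V,
      (1 / Tnm G 𝒦) *
          |∑ i ∈ Finset.Icc (-(𝒦 : ℤ)) (𝒦 : ℤ), ∑ j ∈ Finset.Icc (-(𝒦 : ℤ)) (𝒦 : ℤ),
            (μ (((i + ⌊(n : ℝ) * xs v⌋ : ℤ) : ℝ) / (n : ℝ))
                (((j + ⌊(m : ℝ) * ys v⌋ : ℤ) : ℝ) / (m : ℝ)) - μ (xs v) (ys v)) *
              G ((i : ℝ) / (𝒦 : ℝ)) * G ((j : ℝ) / (𝒦 : ℝ))|
        ≤ C * ((𝒦 : ℝ) + 1) / (n : ℝ) + C * ((𝒦 : ℝ) + 1) / (m : ℝ) := by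
  intro v hv
  obtain ⟨hxv, hyv⟩ := hxy v hv
  obtain ⟨hp1, hp2, hq1, hq2⟩ := hpq v hv
  have hC : 0 ≤ C := le_trans (abs_nonneg _)
    (hD1 0 (by norm_num) 0 (by norm_num))
  have hnpos : (0 : ℝ) < n := by exact_mod_cast hn
  have hmpos : (0 : ℝ) < m := by exact_mod_cast hm
  set D : ℝ := C * ((𝒦 : ℝ) + 1) / (n : ℝ) + C * ((𝒦 : ℝ) + 1) / (m : ℝ) with hD
  have hDnn : 0 ≤ D := by positivity
  -- T positivity
  have hzero : (0 : ℤ) ∈ Finset.Icc (-(𝒦 : ℤ)) (𝒦 : ℤ) := by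
    simp [Finset.mem_Icc]
  have hT1 : (1 : ℝ) ≤ Tnm G 𝒦 := by
    have := Finset.single_le_sum (f := fun i : ℤ =>
        ∑ j ∈ Finset.Icc (-(𝒦 : ℤ)) (𝒦 : ℤ), G ((i : ℝ) / (𝒦 : ℝ)) * G ((j : ℝ) / (𝒦 : ℝ)))
      (fun i _ => Finset.sum_nonneg fun j _ => mul_nonneg (hGpos _) (hGpos _)) hzero
    have h0 : (1 : ℝ) ≤ ∑ j ∈ Finset.Icc (-(𝒦 : ℤ)) (𝒦 : ℤ),
        G (((0 : ℤ) : ℝ) / (𝒦 : ℝ)) * G ((j : ℝ) / (𝒦 : ℝ)) := by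
      have := Finset.single_le_sum (f := fun j : ℤ =>
          G (((0 : ℤ) : ℝ) / (𝒦 : ℝ)) * G ((j : ℝ) / (𝒦 : ℝ)))
        (fun j _ => mul_nonneg (hGpos _) (hGpos _)) hzero
      simpa [hG0] using this
    exact h0.trans (le_trans this (le_of_eq rfl))
  have hTpos : 0 < Tnm G 𝒦 := lt_of_lt_of_le one_pos hT1
  -- pointwise bound on the sum
  have hsum : |∑ i ∈ Finset.Icc (-(𝒦 : ℤ)) (𝒦 : ℤ), ∑ j ∈ Finset.Icc (-(𝒦 : ℤ)) (𝒦 : ℤ),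
      (μ (((i + ⌊(n : ℝ) * xs v⌋ : ℤ) : ℝ) / (n : ℝ))
          (((j + ⌊(m : ℝ) * ys v⌋ : ℤ) : ℝ) / (m : ℝ)) - μ (xs v) (ys v)) *
        G ((i : ℝ) / (𝒦 : ℝ)) * G ((j : ℝ) / (𝒦 : ℝ))| ≤ D * Tnm G 𝒦 := by
    rw [hD, Tnm, Finset.mul_sum]
    refine le_trans (Finset.abs_sum_le_sum_abs _ _) (Finset.sum_le_sum fun i hi => ?_)
    rw [Finset.mul_sum]
    refine le_trans (Finset.abs_sum_le_sum_abs _ _) (Finset.sum_le_sum fun j hj => ?_)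
    obtain ⟨hmem1, hdist1⟩ := grid_bound n 𝒦 hn (xs v) hxv hp1 hp2 i hi
    obtain ⟨hmem2, hdist2⟩ := grid_bound m 𝒦 hm (ys v) hyv hq1 hq2 j hj
    set a : ℝ := ((i + ⌊(n : ℝ) * xs v⌋ : ℤ) : ℝ) / (n : ℝ)
    set b : ℝ := ((j + ⌊(m : ℝ) * ys v⌋ : ℤ) : ℝ) / (m : ℝ)
    have hstep : |μ a b - μ (xs v) (ys v)| ≤
        C * ((𝒦 : ℝ) + 1) / (n : ℝ) + C * ((𝒦 : ℝ) + 1) / (m : ℝ) := by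
      have t1 : |μ a b - μ a (ys v)| ≤ C * |b - ys v| :=
        lip_snd μ C hμ hD2 hmem1 hyv hmem2
      have t2 : |μ a (ys v) - μ (xs v) (ys v)| ≤ C * |a - xs v| :=
        lip_fst μ C hμ hD1 hyv hxv hmem1
      have tri : |μ a b - μ (xs v) (ys v)| ≤
          |μ a b - μ a (ys v)| + |μ a (ys v) - μ (xs v) (ys v)| := by
        have := abs_sub_le (μ a b) (μ a (ys v)) (μ (xs v) (ys v))
        linarith [this]
      have c1 : C * |b - ys v| ≤ C * (((𝒦 : ℝ) + 1) / (m : ℝ)) :=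
        mul_le_mul_of_nonneg_left hdist2 hC
      have c2 : C * |a - xs v| ≤ C * (((𝒦 : ℝ) + 1) / (n : ℝ)) :=
        mul_le_mul_of_nonneg_left hdist1 hC
      have e1 : C * (((𝒦 : ℝ) + 1) / (m : ℝ)) = C * ((𝒦 : ℝ) + 1) / (m : ℝ) := by ring
      have e2 : C * (((𝒦 : ℝ) + 1) / (n : ℝ)) = C * ((𝒦 : ℝ) + 1) / (n : ℝ) := by ring
      linarith
    have hGG : 0 ≤ G ((i : ℝ) / (𝒦 : ℝ)) * G ((j : ℝ) / (𝒦 : ℝ)) :=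
      mul_nonneg (hGpos _) (hGpos _)
    calc |(μ a b - μ (xs v) (ys v)) * G ((i : ℝ) / (𝒦 : ℝ)) * G ((j : ℝ) / (𝒦 : ℝ))|
        = |μ a b - μ (xs v) (ys v)| * (G ((i : ℝ) / (𝒦 : ℝ)) * G ((j : ℝ) / (𝒦 : ℝ))) := by
          rw [mul_assoc, abs_mul, abs_of_nonneg hGG]
      _ ≤ D * (G ((i : ℝ) / (𝒦 : ℝ)) * G ((j : ℝ) / (𝒦 : ℝ))) :=
          mul_le_mul_of_nonneg_right hstep hGG
  -- conclude
  calc (1 / Tnm G 𝒦) * |∑ i ∈ Finset.Icc (-(𝒦 : ℤ)) (𝒦 : ℤ),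
        ∑ j ∈ Finset.Icc (-(𝒦 : ℤ)) (𝒦 : ℤ),
          (μ (((i + ⌊(n : ℝ) * xs v⌋ : ℤ) : ℝ) / (n : ℝ))
              (((j + ⌊(m : ℝ) * ys v⌋ : ℤ) : ℝ) / (m : ℝ)) - μ (xs v) (ys v)) *
            G ((i : ℝ) / (𝒦 : ℝ)) * G ((j : ℝ) / (𝒦 : ℝ))|
      ≤ (1 / Tnm G 𝒦) * (D * Tnm G 𝒦) :=
        mul_le_mul_of_nonneg_left hsum (by positivity)
    _ = D := by field_simp

end
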